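/- arXiv:1509.02945 — 2 statements merged into one kernel-verified Lean document; each statement's English description precedes it below -/
import Mathlib

section
/- The series Σ_{n=0}^{∞} (1/c_n)·K_n converges to the zero function in L²([−1,1]; ℝ); that is, the partial sums S_N(s) := Σ_{n=0}^{N−1} K_n(s)/c_n satisfy ∫_{−1}^{1} S_N(s)² ds → 0 as N → ∞. -/
open Polynomial

/-- The `n`-th Legendre polynomial (over `ℝ`), normalized so that `legendre n` evaluates
to `1` at `1`, defined via Rodrigues' formula. -/
noncomputable def legendre (n : ℕ) : Polynomial ℝ :=
  ((1 : ℝ) / (2 ^ n * n.factorial)) • derivative^[n] ((X ^ 2 - 1) ^ n)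

/-- The `n`-th Koornwinder polynomial `K_n(s) = -(1+s) L_n'(s) + (n² + n + 1) L_n(s)`. -/
noncomputable def koornwinder (n : ℕ) : Polynomial ℝ :=
  -(1 + X) * derivative (legendre n) + ((n : ℝ) ^ 2 + (n : ℝ) + 1) • legendre n


/-- The squared norm of the `n`-th Koornwinder polynomial:
`c_n = (n²+1)((n+1)²+1)/(2n+1)`. -/
noncomputable def koornNormSq (n : ℕ) : ℝ :=
  (((n : ℝ) ^ 2 + 1) * (((n : ℝ) + 1) ^ 2 + 1)) / (2 * (n : ℝ) + 1)


/-!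
From Rodrigues' formula, `L_{n+1}' = x L_n' + (n+1) L_n` and `L_{n+2}' = (2n+3) L_{n+1} + L_n'`.
Together they give `(x² - 1) L_n' = (n+1) (L_{n+1} - x L_n)`, hence `L_n(1) = 1` and the Legendre
equation `((x² - 1) L_n')' = n(n+1) L_n`, which makes the `L_n` orthogonal on `[-1, 1]`.

With `Q_N = ∑_{k<N} (2k+1) L_k` one gets `(1+x) L_N' = N L_N + Q_N`, so `K_n = (n²+1) L_n - Q_n`
and `K_n / c_n = Q_{n+1} / ((n+1)²+1) - Q_n / (n²+1)`: the partial sums telescope to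
`Q_N / (N²+1)`. Since `‖L_k‖² = 2/(2k+1)`, orthogonality gives `‖Q_N‖² = 2N²`, so the squared
`L²` norm of the `N`-th partial sum is `2N² / (N²+1)² → 0`.
-/

open Filter Finset

namespace Polynomial

noncomputable def intervalIntegralₗ (a b : ℝ) : ℝ[X] →ₗ[ℝ] ℝ where
  toFun p := ∫ x in a..b, p.eval x
  map_add' p q := by
    simp only [eval_add]
    exact intervalIntegral.integral_add (p.continuous.intervalIntegrable a b)
      (q.continuous.intervalIntegrable a b)
  map_smul' c p := by simp

theorem intervalIntegralₗ_apply (a b : ℝ) (p : ℝ[X]) :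
    intervalIntegralₗ a b p = ∫ x in a..b, p.eval x :=
  rfl

theorem intervalIntegralₗ_mul_derivative (a b : ℝ) (p q : ℝ[X]) :
    intervalIntegralₗ a b (p * derivative q) =
      p.eval b * q.eval b - p.eval a * q.eval a - intervalIntegralₗ a b (derivative p * q) := by
  simp only [intervalIntegralₗ_apply, eval_mul]
  exact intervalIntegral.integral_mul_deriv_eq_deriv_mul (fun x _ ↦ p.hasDerivAt x)
    (fun x _ ↦ q.hasDerivAt x) ((derivative p).continuous.intervalIntegrable a b)
    ((derivative q).continuous.intervalIntegrable a b)

theorem intervalIntegralₗ_mul_eq_zero_of_sturmLiouville {w p q : ℝ[X]} {a b μ ν : ℝ}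
    (ha : w.IsRoot a) (hb : w.IsRoot b) (hp : derivative (w * derivative p) = μ • p)
    (hq : derivative (w * derivative q) = ν • q) (hμν : μ ≠ ν) :
    intervalIntegralₗ a b (p * q) = 0 := by
  have hpq := intervalIntegralₗ_mul_derivative a b p (w * derivative q)
  have hqp := intervalIntegralₗ_mul_derivative a b q (w * derivative p)
  simp only [hp, hq, mul_smul_comm, map_smul, smul_eq_mul, eval_mul, ha.eq_zero, hb.eq_zero,
    zero_mul, mul_zero, sub_zero, zero_sub] at hpq hqp
  rw [mul_comm q] at hqp
  rw [show derivative p * (w * derivative q) = derivative q * (w * derivative p) by ring] at hpq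
  have : (μ - ν) * intervalIntegralₗ a b (p * q) = 0 := by linear_combination hqp - hpq
  exact (mul_eq_zero.mp this).resolve_left (sub_ne_zero.mpr hμν)

end Polynomial

theorem derivative_legendre (n : ℕ) :
    derivative (legendre n) =
      ((1 : ℝ) / (2 ^ n * n.factorial)) • derivative^[n + 1] ((X ^ 2 - 1) ^ n) := by
  rw [legendre, derivative_smul, Function.iterate_succ_apply']

theorem derivative_legendre_succ (n : ℕ) :
    derivative (legendre (n + 1)) = X * derivative (legendre n) + (n + 1 : ℝ[X]) * legendre n := by
  have hD : derivative ((X ^ 2 - 1 : ℝ[X]) ^ (n + 1)) =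
      (2 * ((n : ℝ) + 1)) • ((X ^ 2 - 1) ^ n * X) := by
    simp [derivative_pow, smul_eq_C_mul, map_ofNat]
    ring
  have hc : (1 : ℝ) / (2 ^ (n + 1) * (n + 1).factorial) * (2 * (n + 1)) =
      1 / (2 ^ n * n.factorial) := by
    rw [Nat.factorial_succ]
    push_cast
    field_simp
    ring
  rw [derivative_legendre, derivative_legendre, legendre, Function.iterate_succ_apply, hD,
    iterate_derivative_smul, iterate_derivative_mul_X, smul_smul, hc, Nat.add_sub_cancel,
    smul_add, nsmul_eq_mul, mul_smul_comm, mul_smul_comm, mul_comm _ X, Nat.cast_succ]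

theorem iterate_derivative_two_sq_sub_one_pow (n : ℕ) :
    derivative^[2] ((X ^ 2 - 1 : ℝ[X]) ^ (n + 2)) =
      (2 * ((n : ℝ) + 2)) • ((2 * (n : ℝ) + 3) • (X ^ 2 - 1) ^ (n + 1) +
        (2 * ((n : ℝ) + 1)) • (X ^ 2 - 1) ^ n) := by
  simp [derivative_pow, smul_eq_C_mul, map_ofNat]
  ring

theorem derivative_legendre_add_two (n : ℕ) :
    derivative (legendre (n + 2)) =
      (2 * n + 3 : ℝ[X]) * legendre (n + 1) + derivative (legendre n) := by
  rw [derivative_legendre, derivative_legendre, legendre, show n + 2 + 1 = n + 1 + 2 by ring,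
    Function.iterate_add_apply, iterate_derivative_two_sq_sub_one_pow, iterate_derivative_smul,
    iterate_map_add, iterate_derivative_smul, iterate_derivative_smul, smul_smul, smul_add,
    smul_smul, smul_smul, mul_assoc,
    show (2 * n + 3 : ℝ[X]) = C (2 * (n : ℝ) + 3) by simp [map_ofNat], ← smul_eq_C_mul, smul_smul]
  match_scalars <;> simp only [Nat.factorial_succ] <;> push_cast <;> field_simp <;> ring

theorem sq_sub_one_mul_derivative_legendre (n : ℕ) :
    (X ^ 2 - 1) * derivative (legendre n) =
      (n + 1 : ℝ[X]) * (legendre (n + 1) - X * legendre n) := by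
  linear_combination (norm := (push_cast; ring)) derivative_legendre_add_two n -
    derivative_legendre_succ (n + 1) - X * derivative_legendre_succ n

theorem legendre_eval_one (n : ℕ) : (legendre n).eval 1 = 1 := by
  induction n with
  | zero => simp [legendre]
  | succ n ih =>
    have h := congrArg (eval 1) (sq_sub_one_mul_derivative_legendre n)
    simp only [eval_mul, eval_sub, eval_pow, eval_X, eval_one, eval_add, eval_natCast, ih] at h
    have hn : (n : ℝ) + 1 ≠ 0 := by positivity
    simpa [hn, sub_eq_zero] using h

theorem derivative_sq_sub_one_mul_derivative_legendre (n : ℕ) :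
    derivative ((X ^ 2 - 1) * derivative (legendre n)) = ((n : ℝ) * (n + 1)) • legendre n := by
  rw [sq_sub_one_mul_derivative_legendre, smul_eq_C_mul]
  simp only [derivative_mul, derivative_sub, derivative_natCast, derivative_one,
    derivative_X, derivative_legendre_succ, map_mul, map_add, map_natCast, map_one]
  ring

theorem intervalIntegralₗ_legendre_mul_legendre {m n : ℕ} (hmn : m ≠ n) :
    intervalIntegralₗ (-1) 1 (legendre m * legendre n) = 0 := by
  refine intervalIntegralₗ_mul_eq_zero_of_sturmLiouville (w := X ^ 2 - 1) (by simp) (by simp)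
    (derivative_sq_sub_one_mul_derivative_legendre m)
    (derivative_sq_sub_one_mul_derivative_legendre n) fun h ↦ hmn ?_
  have hfac : ((m : ℝ) - n) * (m + n + 1) = 0 := by linear_combination h
  exact_mod_cast sub_eq_zero.mp ((mul_eq_zero.mp hfac).resolve_right (by positivity))

/-- Twice the Christoffel–Darboux kernel `x ↦ ∑_{k<N} (2k+1)/2 · L_k(x) L_k(1)` of `L²[-1,1]`. -/
noncomputable def legendreKernel (N : ℕ) : ℝ[X] :=
  ∑ k ∈ range N, (2 * (k : ℝ) + 1) • legendre k

theorem legendreKernel_succ (N : ℕ) :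
    legendreKernel (N + 1) = legendreKernel N + (2 * (N : ℝ) + 1) • legendre N :=
  sum_range_succ _ _

theorem one_add_X_mul_derivative_legendre (N : ℕ) :
    (1 + X) * derivative (legendre N) = (N : ℝ[X]) * legendre N + legendreKernel N := by
  induction N with
  | zero => simp [legendre, legendreKernel]
  | succ N ih =>
    rw [legendreKernel_succ, smul_eq_C_mul]
    simp only [map_add, map_mul, map_natCast, map_one, map_ofNat]
    linear_combination (norm := (push_cast; ring)) (1 + X) * derivative_legendre_succ N +
      sq_sub_one_mul_derivative_legendre N + ih

theorem koornwinder_eq (n : ℕ) :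
    koornwinder n = ((n : ℝ) ^ 2 + 1) • legendre n - legendreKernel n := by
  rw [koornwinder, smul_eq_C_mul, smul_eq_C_mul]
  simp only [map_add, map_pow, map_natCast, map_one]
  linear_combination -one_add_X_mul_derivative_legendre n

theorem koornNormSq_inv_smul_koornwinder (n : ℕ) :
    (koornNormSq n)⁻¹ • koornwinder n =
      (((n + 1 : ℕ) : ℝ) ^ 2 + 1)⁻¹ • legendreKernel (n + 1) -
        ((n : ℝ) ^ 2 + 1)⁻¹ • legendreKernel n := by
  rw [koornwinder_eq, legendreKernel_succ, koornNormSq]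
  simp only [smul_sub, smul_add, smul_smul]
  match_scalars
  · field_simp
  · field_simp
    ring

theorem sum_koornNormSq_inv_smul_koornwinder (N : ℕ) :
    ∑ n ∈ range N, (koornNormSq n)⁻¹ • koornwinder n =
      ((N : ℝ) ^ 2 + 1)⁻¹ • legendreKernel N := by
  simp only [koornNormSq_inv_smul_koornwinder]
  rw [sum_range_sub (fun n ↦ ((n : ℝ) ^ 2 + 1)⁻¹ • legendreKernel n)]
  simp [legendreKernel]

theorem intervalIntegralₗ_legendre_mul_legendreKernel (N : ℕ) :
    intervalIntegralₗ (-1) 1 (legendre N * legendreKernel N) = 0 := by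
  simp only [legendreKernel, mul_sum, mul_smul_comm, map_sum, map_smul]
  refine sum_eq_zero fun k hk ↦ ?_
  rw [intervalIntegralₗ_legendre_mul_legendre (mem_range.mp hk).ne', smul_zero]

theorem intervalIntegralₗ_legendre_mul_self (N : ℕ) :
    intervalIntegralₗ (-1) 1 (legendre N * legendre N) = 2 / (2 * N + 1) := by
  -- `∫ (1+x) L_N L_N'` is computed once from the kernel identity and once by parts.
  have hkernel : intervalIntegralₗ (-1) 1 ((1 + X) * legendre N * derivative (legendre N)) =
      N * intervalIntegralₗ (-1) 1 (legendre N * legendre N) := by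
    rw [mul_assoc, mul_left_comm, one_add_X_mul_derivative_legendre, mul_add, map_add,
      intervalIntegralₗ_legendre_mul_legendreKernel, add_zero, mul_left_comm, ← nsmul_eq_mul,
      map_nsmul, nsmul_eq_mul]
  have hparts := intervalIntegralₗ_mul_derivative (-1) 1 ((1 + X) * legendre N) (legendre N)
  have hD : derivative ((1 + X) * legendre N) * legendre N =
      legendre N * legendre N + (1 + X) * legendre N * derivative (legendre N) := by
    simp only [derivative_mul, derivative_add, derivative_one, derivative_X]
    ring
  rw [hD, map_add, hkernel] at hparts
  simp only [eval_mul, eval_add, eval_one, eval_X, legendre_eval_one] at hparts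
  rw [eq_div_iff (by positivity)]
  linear_combination hparts

theorem intervalIntegralₗ_legendreKernel_mul_self (N : ℕ) :
    intervalIntegralₗ (-1) 1 (legendreKernel N * legendreKernel N) = 2 * N ^ 2 := by
  induction N with
  | zero => simp [legendreKernel]
  | succ N ih =>
    have hsq : legendreKernel (N + 1) * legendreKernel (N + 1) =
        legendreKernel N * legendreKernel N +
          (2 * (2 * (N : ℝ) + 1)) • (legendre N * legendreKernel N) +
          (2 * (N : ℝ) + 1) ^ 2 • (legendre N * legendre N) := by
      rw [legendreKernel_succ]
      simp only [smul_eq_C_mul, map_mul, map_pow, map_add, map_natCast, map_one, map_ofNat]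
      ring
    rw [hsq, map_add, map_add, map_smul, map_smul, ih,
      intervalIntegralₗ_legendre_mul_legendreKernel, intervalIntegralₗ_legendre_mul_self]
    simp only [smul_eq_mul]
    field_simp
    push_cast
    ring

theorem tendsto_two_mul_sq_div_sq_add_one_sq :
    Tendsto (fun N : ℕ ↦ 2 * (N : ℝ) ^ 2 / ((N : ℝ) ^ 2 + 1) ^ 2) atTop (nhds 0) := by
  have hlim : Tendsto (fun N : ℕ ↦ 2 / ((N : ℝ) ^ 2 + 1)) atTop (nhds 0) :=
    tendsto_const_nhds.div_atTop <| tendsto_atTop_add_const_right _ 1 <|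
      (tendsto_pow_atTop two_ne_zero).comp tendsto_natCast_atTop_atTop
  refine squeeze_zero (fun N ↦ by positivity) (fun N ↦ ?_) hlim
  rw [div_le_div_iff₀ (by positivity) (by positivity)]
  nlinarith

open MeasureTheory intervalIntegral Filter in
/-- The series `∑ K_n / c_n` converges to the zero function in `L²([-1,1])`: the `L²` norms
(squared) of the partial sums tend to `0`. -/
theorem koornwinder_sum_tendsto_zero :
    Tendsto
      (fun N : ℕ =>
        ∫ s in (-1 : ℝ)..1,
          (∑ n ∈ Finset.range N, (koornwinder n).eval s / koornNormSq n) ^ 2)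
      atTop (nhds 0) := by
  have hsum (N : ℕ) (s : ℝ) : ∑ n ∈ range N, (koornwinder n).eval s / koornNormSq n =
      ((N : ℝ) ^ 2 + 1)⁻¹ * (legendreKernel N).eval s := by
    simpa [eval_finsetSum, div_eq_inv_mul] using
      congrArg (eval s) (sum_koornNormSq_inv_smul_koornwinder N)
  have hnormSq (N : ℕ) : ∫ s in (-1 : ℝ)..1,
      (∑ n ∈ range N, (koornwinder n).eval s / koornNormSq n) ^ 2 =
        2 * (N : ℝ) ^ 2 / ((N : ℝ) ^ 2 + 1) ^ 2 := by
    simp_rw [hsum, mul_pow, intervalIntegral.integral_const_mul, sq ((legendreKernel N).eval _),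
      ← eval_mul, ← intervalIntegralₗ_apply, intervalIntegralₗ_legendreKernel_mul_self]
    field_simp
  simpa only [hnormSq] using tendsto_two_mul_sq_div_sq_add_one_sq
end

section
/- Under the stated hypotheses — in particular, assuming the strong, locally uniform convergence of the approximating semigroup families T_N to T (the conclusion of the Trotter–Kato theorem under conditions (A1) and (A2)) and that G is globally Lipschitz — the Galerkin mild solutions converge uniformly on bounded time intervals to the mild solution: for every T* > 0, lim_{N→∞} sup_{t∈[0,T*]} ‖u_N(t) − u(t)‖ = 0. -/
/-!
On `[0, T*]` both semigroups are bounded by some `B`, so the Lipschitz bound on `G` turns the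
difference of the two Duhamel formulas into the integral inequality
`‖u_N t - u t‖ ≤ η_N (1 + T*) + B K ∫₀ᵗ ‖u_N - u‖`, where `η_N` bounds the defect
`‖T_N(r) Π_N x - T(r) x‖` for `r ∈ [0, T*]` and `x` in the compact set `{u₀} ∪ G(u([0, T*]))`.
Uniformly bounded operators that converge strongly converge uniformly on compact sets, so
`η_N → 0`, and Grönwall's inequality gives `sup_{[0, T*]} ‖u_N - u‖ ≤ η_N (1 + T*) e^{B K T*}`.
-/

open MeasureTheory intervalIntegral Set Filter

section UniformConvergence

variable {ι α E : Type*} {l : Filter ι}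

theorem TendstoUniformlyOn.tendsto_iSup_norm_sub [SeminormedAddCommGroup E] {F : ι → α → E}
    {f : α → E} {s : Set α} (h : TendstoUniformlyOn F f l s) :
    Tendsto (fun i => ⨆ a : s, ‖F i a - f a‖) l (nhds 0) := by
  rw [Metric.tendsto_nhds]
  intro ε hε
  filter_upwards [Metric.tendstoUniformlyOn_iff.1 h (ε / 2) (half_pos hε)] with i hi
  have hle : ⨆ a : s, ‖F i a - f a‖ ≤ ε / 2 :=
    Real.iSup_le (fun a => by simpa [dist_eq_norm'] using (hi a a.2).le) (by positivity)
  rw [Real.dist_0_eq_abs, abs_of_nonneg (Real.iSup_nonneg fun _ => norm_nonneg _)]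
  linarith

theorem tendstoUniformlyOn_of_tendsto_iSup_norm_sub [SeminormedAddCommGroup E] {F : ι → α → E}
    {f : α → E} {s : Set α} (hbdd : ∀ i, BddAbove (range fun a : s => ‖F i a - f a‖))
    (h : Tendsto (fun i => ⨆ a : s, ‖F i a - f a‖) l (nhds 0)) :
    TendstoUniformlyOn F f l s := by
  rw [Metric.tendstoUniformlyOn_iff]
  intro ε hε
  filter_upwards [h.eventually (gt_mem_nhds hε)] with i hi a ha
  rw [dist_eq_norm']
  exact (le_ciSup (hbdd i) ⟨a, ha⟩).trans_lt hi

theorem tendstoUniformlyOn_prod_clm_apply_of_isCompact {𝕜 F : Type*} [NontriviallyNormedField 𝕜]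
    [SeminormedAddCommGroup E] [NormedSpace 𝕜 E] [SeminormedAddCommGroup F] [NormedSpace 𝕜 F]
    {A : ι → α → E →L[𝕜] F} {A₀ : α → E →L[𝕜] F} {s : Set α} {B : ℝ}
    (hA : ∀ i, ∀ a ∈ s, ‖A i a‖ ≤ B) (hA₀ : ∀ a ∈ s, ‖A₀ a‖ ≤ B)
    (h : ∀ x, TendstoUniformlyOn (fun i a => A i a x) (fun a => A₀ a x) l s)
    {K : Set E} (hK : IsCompact K) :
    TendstoUniformlyOn (fun i (p : α × E) => A i p.1 p.2) (fun p => A₀ p.1 p.2) l (s ×ˢ K) := by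
  rw [Metric.tendstoUniformlyOn_iff]
  intro ε hε
  obtain ⟨δ, hδ, hBδ⟩ := exists_pos_mul_lt (by positivity : 0 < ε / 3) B
  obtain ⟨c, -, hcfin, hKc⟩ := hK.finite_cover_balls hδ
  have hnet : ∀ᶠ i in l, ∀ y ∈ c, ∀ a ∈ s, dist (A₀ a y) (A i a y) < ε / 3 :=
    hcfin.eventually_all.2 fun y _ => Metric.tendstoUniformlyOn_iff.1 (h y) _ (by positivity)
  filter_upwards [hnet] with i hi p ⟨ha, hx⟩
  obtain ⟨y, hy, hxy⟩ := mem_iUnion₂.1 (hKc hx)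
  have hclose : ∀ C : E →L[𝕜] F, ‖C‖ ≤ B → dist (C p.2) (C y) < ε / 3 := fun C hC =>
    calc dist (C p.2) (C y) ≤ ‖C‖ * dist p.2 y := C.dist_le_opNorm _ _
      _ ≤ B * δ := mul_le_mul hC (Metric.mem_ball.1 hxy).le dist_nonneg
          ((norm_nonneg _).trans hC)
      _ < ε / 3 := hBδ
  calc dist (A₀ p.1 p.2) (A i p.1 p.2)
      ≤ dist (A₀ p.1 p.2) (A₀ p.1 y) + dist (A₀ p.1 y) (A i p.1 y)
        + dist (A i p.1 y) (A i p.1 p.2) := dist_triangle4 _ _ _ _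
    _ < ε / 3 + ε / 3 + ε / 3 := by
        gcongr
        · exact hclose _ (hA₀ _ ha)
        · exact hi y hy _ ha
        · rw [dist_comm]; exact hclose _ (hA i _ ha)
    _ = ε := by ring

end UniformConvergence

theorem ContinuousOn.clm_apply_of_norm_le {α 𝕜 E F : Type*} [TopologicalSpace α]
    [NontriviallyNormedField 𝕜] [SeminormedAddCommGroup E] [NormedSpace 𝕜 E]
    [SeminormedAddCommGroup F] [NormedSpace 𝕜 F] {S : α → E →L[𝕜] F} {g : α → E}
    {s : Set α} {B : ℝ} (hS : ∀ x, ContinuousOn (fun a => S a x) s) (hB : ∀ a ∈ s, ‖S a‖ ≤ B)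
    (hg : ContinuousOn g s) : ContinuousOn (fun a => S a (g a)) s := by
  intro a ha
  have hsmall : Tendsto (fun b => S b (g b - g a)) (nhdsWithin a s) (nhds 0) := by
    have hg' : Tendsto (fun b => B * ‖g b - g a‖) (nhdsWithin a s) (nhds 0) := by
      simpa using (Tendsto.sub (hg a ha) (tendsto_const_nhds (x := g a))).norm.const_mul B
    refine squeeze_zero_norm' ?_ hg'
    filter_upwards [self_mem_nhdsWithin] with b hb
    exact (S b).le_of_opNorm_le (hB b hb) _
  have := hsmall.add (hS (g a) a ha)
  simp only [← map_add, sub_add_cancel, zero_add] at this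
  exact this

theorem le_mul_exp_of_le_add_mul_integral {f : ℝ → ℝ} {a b c L : ℝ} (hf : Continuous f)
    (hL : 0 ≤ L) (h : ∀ t ∈ Icc a b, f t ≤ c + L * ∫ s in a..t, f s) :
    ∀ t ∈ Icc a b, f t ≤ c * Real.exp (L * (t - a)) := by
  intro t ht
  have hderiv : ∀ x, HasDerivAt (fun t => ∫ s in a..t, f s) (f x) x := fun x =>
    (hf.integral_hasStrictDerivAt a x).hasDerivAt
  have hint := le_gronwallBound_of_liminf_deriv_right_le (δ := 0) (K := L) (ε := c)
    (fun x _ => (hderiv x).continuousAt.continuousWithinAt)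
    (fun x _ r hr => (hderiv x).hasDerivWithinAt.liminf_right_slope_le hr) (by simp)
    (fun x hx => by linarith [h x (Ico_subset_Icc_self hx)]) t ht
  rcases hL.eq_or_lt with rfl | hL
  · simpa using h t ht
  rw [gronwallBound_of_K_ne_0 hL.ne'] at hint
  calc f t ≤ c + L * ∫ s in a..t, f s := h t ht
    _ ≤ c + L * (c / L * (Real.exp (L * (t - a)) - 1)) := by gcongr; simpa using hint
    _ = c * Real.exp (L * (t - a)) := by field_simp; ring

section Duhamel

variable {X : Type*} [NormedAddCommGroup X] [NormedSpace ℝ X]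

/-- Mild solution of `u' = A u + G u`, `u 0 = u₀` on `[0, τ]`, where `S` is the semigroup
generated by `A`. -/
def IsMildSolutionOn (S : ℝ → X →L[ℝ] X) (G : X → X) (u₀ : X) (τ : ℝ) (u : ℝ → X) : Prop :=
  Continuous u ∧ ∀ t ∈ Icc 0 τ, u t = S t u₀ + ∫ s in (0 : ℝ)..t, S (t - s) (G (u s))

theorem intervalIntegrable_clm_apply_sub {S : ℝ → X →L[ℝ] X} {g : ℝ → X} {t B : ℝ}
    (ht : 0 ≤ t) (hS : ∀ x, ContinuousOn (fun r => S r x) (Icc 0 t))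
    (hB : ∀ r ∈ Icc 0 t, ‖S r‖ ≤ B) (hg : Continuous g) :
    IntervalIntegrable (fun s => S (t - s) (g s)) volume 0 t := by
  have hmaps : MapsTo (fun s => t - s) (Icc 0 t) (Icc 0 t) := fun s hs =>
    ⟨by linarith [hs.2], by linarith [hs.1]⟩
  refine ContinuousOn.intervalIntegrable ?_
  rw [uIcc_of_le ht]
  exact ContinuousOn.clm_apply_of_norm_le (fun x => (hS x).comp (by fun_prop) hmaps)
    (fun s hs => hB _ (hmaps hs)) hg.continuousOn

variable {S S' : ℝ → X →L[ℝ] X} {G : X → X} {K : NNReal} {u v : ℝ → X} {u₀ : X}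
  {τ B η : ℝ}

theorem IsMildSolutionOn.norm_sub_le_add_integral (hu : IsMildSolutionOn S G u₀ τ u)
    (hv : IsMildSolutionOn S' G u₀ τ v)
    (hS : ∀ x, ContinuousOn (fun r => S r x) (Icc 0 τ))
    (hS' : ∀ x, ContinuousOn (fun r => S' r x) (Icc 0 τ))
    (hSB : ∀ r ∈ Icc 0 τ, ‖S r‖ ≤ B) (hS'B : ∀ r ∈ Icc 0 τ, ‖S' r‖ ≤ B)
    (hG : LipschitzWith K G) (hη₀ : ∀ r ∈ Icc 0 τ, ‖S' r u₀ - S r u₀‖ ≤ η)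
    (hη : ∀ r ∈ Icc 0 τ, ∀ s ∈ Icc 0 τ, ‖S' r (G (u s)) - S r (G (u s))‖ ≤ η) :
    ∀ t ∈ Icc 0 τ, ‖v t - u t‖ ≤ η * (1 + τ) + B * K * ∫ s in (0 : ℝ)..t, ‖v s - u s‖ := by
  rintro t ⟨ht0, htτ⟩
  have hsub : Icc 0 t ⊆ Icc 0 τ := Icc_subset_Icc_right htτ
  have hIu : IntervalIntegrable (fun s => S (t - s) (G (u s))) volume 0 t :=
    intervalIntegrable_clm_apply_sub ht0 (fun x => (hS x).mono hsub)
      (fun r hr => hSB r (hsub hr)) (hG.continuous.comp hu.1)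
  have hIv : IntervalIntegrable (fun s => S' (t - s) (G (v s))) volume 0 t :=
    intervalIntegrable_clm_apply_sub ht0 (fun x => (hS' x).mono hsub)
      (fun r hr => hS'B r (hsub hr)) (hG.continuous.comp hv.1)
  have he : Continuous fun s => ‖v s - u s‖ := (hv.1.sub hu.1).norm
  have hintegrand : ∀ s ∈ Ioc 0 t,
      ‖S' (t - s) (G (v s)) - S (t - s) (G (u s))‖ ≤ B * K * ‖v s - u s‖ + η := by
    intro s hs
    have hts : t - s ∈ Icc 0 τ := hsub ⟨by linarith [hs.2], by linarith [hs.1]⟩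
    calc ‖S' (t - s) (G (v s)) - S (t - s) (G (u s))‖
        = ‖S' (t - s) (G (v s) - G (u s))
            + (S' (t - s) (G (u s)) - S (t - s) (G (u s)))‖ := by
          rw [map_sub]; abel_nf
      _ ≤ B * (K * ‖v s - u s‖) + η := by
          refine norm_add_le_of_le ((S' _).le_of_opNorm_le_of_le (hS'B _ hts) ?_)
            (hη _ hts s (hsub (Ioc_subset_Icc_self hs)))
          simpa only [dist_eq_norm] using hG.dist_le_mul (v s) (u s)
      _ = B * K * ‖v s - u s‖ + η := by ring
  calc ‖v t - u t‖
      = ‖(S' t u₀ - S t u₀)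
          + ∫ s in (0 : ℝ)..t, (S' (t - s) (G (v s)) - S (t - s) (G (u s)))‖ := by
        rw [hv.2 t ⟨ht0, htτ⟩, hu.2 t ⟨ht0, htτ⟩, integral_sub hIv hIu]; abel_nf
    _ ≤ η + ∫ s in (0 : ℝ)..t, (B * K * ‖v s - u s‖ + η) :=
        norm_add_le_of_le (hη₀ t ⟨ht0, htτ⟩) (intervalIntegral.norm_integral_le_of_norm_le ht0
          (ae_of_all _ hintegrand)
          ((by fun_prop : Continuous fun s => B * K * ‖v s - u s‖ + η).intervalIntegrable _ _))
    _ = η * (1 + t) + B * K * ∫ s in (0 : ℝ)..t, ‖v s - u s‖ := by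
        rw [integral_add ((he.const_mul _).intervalIntegrable _ _) intervalIntegrable_const,
          intervalIntegral.integral_const_mul, intervalIntegral.integral_const]
        simp only [sub_zero, smul_eq_mul]
        ring
    _ ≤ η * (1 + τ) + B * K * ∫ s in (0 : ℝ)..t, ‖v s - u s‖ := by
        gcongr
        exact (norm_nonneg _).trans (hη₀ 0 ⟨le_rfl, ht0.trans htτ⟩)

theorem IsMildSolutionOn.norm_sub_le (hu : IsMildSolutionOn S G u₀ τ u)
    (hv : IsMildSolutionOn S' G u₀ τ v)
    (hS : ∀ x, ContinuousOn (fun r => S r x) (Icc 0 τ))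
    (hS' : ∀ x, ContinuousOn (fun r => S' r x) (Icc 0 τ))
    (hSB : ∀ r ∈ Icc 0 τ, ‖S r‖ ≤ B) (hS'B : ∀ r ∈ Icc 0 τ, ‖S' r‖ ≤ B)
    (hG : LipschitzWith K G) (hη₀ : ∀ r ∈ Icc 0 τ, ‖S' r u₀ - S r u₀‖ ≤ η)
    (hη : ∀ r ∈ Icc 0 τ, ∀ s ∈ Icc 0 τ, ‖S' r (G (u s)) - S r (G (u s))‖ ≤ η) :
    ∀ t ∈ Icc 0 τ, ‖v t - u t‖ ≤ η * (1 + τ) * Real.exp (B * K * τ) := by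
  intro t ht
  have hB : 0 ≤ B := (norm_nonneg _).trans (hSB 0 ⟨le_rfl, ht.1.trans ht.2⟩)
  have hη0 : 0 ≤ η := (norm_nonneg _).trans (hη₀ 0 ⟨le_rfl, ht.1.trans ht.2⟩)
  calc ‖v t - u t‖ ≤ η * (1 + τ) * Real.exp (B * K * (t - 0)) :=
        le_mul_exp_of_le_add_mul_integral (hv.1.sub hu.1).norm (by positivity)
          (hu.norm_sub_le_add_integral hv hS hS' hSB hS'B hG hη₀ hη) t ht
    _ ≤ η * (1 + τ) * Real.exp (B * K * τ) := by
        have hτ : 0 ≤ 1 + τ := by linarith [ht.1.trans ht.2]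
        gcongr
        linarith [ht.2]

theorem IsMildSolutionOn.tendstoUniformlyOn {ι : Type*} {l : Filter ι}
    {S' : ι → ℝ → X →L[ℝ] X} {v : ι → ℝ → X} (hu : IsMildSolutionOn S G u₀ τ u)
    (hv : ∀ i, IsMildSolutionOn (S' i) G u₀ τ (v i))
    (hS : ∀ x, ContinuousOn (fun r => S r x) (Icc 0 τ))
    (hS' : ∀ i x, ContinuousOn (fun r => S' i r x) (Icc 0 τ))
    (hSB : ∀ r ∈ Icc 0 τ, ‖S r‖ ≤ B) (hS'B : ∀ i, ∀ r ∈ Icc 0 τ, ‖S' i r‖ ≤ B)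
    (hG : LipschitzWith K G)
    (hconv : ∀ x, TendstoUniformlyOn (fun i r => S' i r x) (fun r => S r x) l (Icc 0 τ)) :
    TendstoUniformlyOn v u l (Icc 0 τ) := by
  set C := insert u₀ ((fun s => G (u s)) '' Icc 0 τ)
  have hC : IsCompact C := (isCompact_Icc.image (hG.continuous.comp hu.1)).insert u₀
  have hdefect := Metric.tendstoUniformlyOn_iff.1
    (tendstoUniformlyOn_prod_clm_apply_of_isCompact hS'B hSB hconv hC)
  rw [Metric.tendstoUniformlyOn_iff]
  intro ε hε
  obtain ⟨η, hη, hηε⟩ := exists_pos_mul_lt hε ((1 + τ) * Real.exp (B * K * τ))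
  filter_upwards [hdefect η hη] with i hi t ht
  have hiC : ∀ r ∈ Icc 0 τ, ∀ x ∈ C, ‖S' i r x - S r x‖ ≤ η := fun r hr x hx => by
    simpa [dist_eq_norm'] using (hi (r, x) ⟨hr, hx⟩).le
  have hdiff := hu.norm_sub_le (hv i) hS (hS' i) hSB (hS'B i) hG
    (fun r hr => hiC r hr u₀ (mem_insert _ _))
    (fun r hr s hs => hiC r hr _ (mem_insert_of_mem _ (mem_image_of_mem _ hs))) t ht
  rw [dist_eq_norm']
  linarith

end Duhamel

theorem galerkin_mild_solutions_converge_general {X : Type*} [NormedAddCommGroup X]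
    [InnerProductSpace ℝ X]
    (M ω : ℝ)
    (T : ℝ → X →L[ℝ] X)
    (hTcont : ∀ x : X, ContinuousOn (fun t => T t x) (Ici 0))
    (hTbound : ∀ t : ℝ, 0 ≤ t → ‖T t‖ ≤ M * Real.exp (ω * t))
    (P : ℕ → X →L[ℝ] X) (hPbound : ∀ N : ℕ, ‖P N‖ ≤ 1)
    (TN : ℕ → ℝ → X →L[ℝ] X)
    (hTNcont : ∀ (N : ℕ) (x : X), ContinuousOn (fun t => TN N t x) (Ici 0))
    (hTNbound : ∀ (N : ℕ) (t : ℝ), 0 ≤ t → ‖TN N t‖ ≤ M * Real.exp (ω * t))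
    (hTrotterKato : ∀ (φ : X) (Tstar : ℝ), 0 < Tstar →
      Tendsto (fun N => ⨆ t : Icc (0 : ℝ) Tstar, ‖TN N (t : ℝ) (P N φ) - T (t : ℝ) φ‖)
        atTop (nhds 0))
    (K : NNReal) (G : X → X) (hG : LipschitzWith K G)
    (u₀ : X) (u : ℝ → X) (hu_cont : Continuous u)
    (hu : ∀ t : ℝ, 0 ≤ t → u t = T t u₀ + ∫ s in (0 : ℝ)..t, T (t - s) (G (u s)))
    (uN : ℕ → ℝ → X) (huN_cont : ∀ N : ℕ, Continuous (uN N))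
    (huN : ∀ (N : ℕ) (t : ℝ), 0 ≤ t →
      uN N t = TN N t (P N u₀) + ∫ s in (0 : ℝ)..t, TN N (t - s) (P N (G (uN N s)))) :
    ∀ Tstar : ℝ, 0 < Tstar →
      Tendsto (fun N => ⨆ t : Icc (0 : ℝ) Tstar, ‖uN N (t : ℝ) - u (t : ℝ)‖)
        atTop (nhds 0) := by
  intro Tstar hTs
  obtain ⟨B, hB⟩ : BddAbove ((fun r => M * Real.exp (ω * r)) '' Icc 0 Tstar) :=
    isCompact_Icc.bddAbove_image (by fun_prop)
  have hTB : ∀ r ∈ Icc 0 Tstar, ‖T r‖ ≤ B := fun r hr =>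
    (hTbound r hr.1).trans (hB (mem_image_of_mem _ hr))
  set S : ℕ → ℝ → X →L[ℝ] X := fun N r => (TN N r).comp (P N)
  have hSB : ∀ N, ∀ r ∈ Icc 0 Tstar, ‖S N r‖ ≤ B := fun N r hr =>
    ((TN N r).opNorm_comp_le _).trans <|
      (mul_le_of_le_one_right (norm_nonneg _) (hPbound N)).trans
        ((hTNbound N r hr.1).trans (hB (mem_image_of_mem _ hr)))
  have hconv (φ : X) :
      TendstoUniformlyOn (fun N r => S N r φ) (fun r => T r φ) atTop (Icc 0 Tstar) := by
    refine tendstoUniformlyOn_of_tendsto_iSup_norm_sub (fun N => ⟨B * ‖φ‖ + B * ‖φ‖, ?_⟩)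
      (hTrotterKato φ Tstar hTs)
    rintro _ ⟨r, rfl⟩
    exact norm_sub_le_of_le ((S N r).le_of_opNorm_le (hSB N r r.2) φ)
      ((T r).le_of_opNorm_le (hTB r r.2) φ)
  refine TendstoUniformlyOn.tendsto_iSup_norm_sub (IsMildSolutionOn.tendstoUniformlyOn
    ⟨hu_cont, fun t ht => hu t ht.1⟩ (fun N => ⟨huN_cont N, fun t ht => huN N t ht.1⟩)
    (fun x => (hTcont x).mono Icc_subset_Ici_self)
    (fun N x => (hTNcont N (P N x)).mono Icc_subset_Ici_self) hTB hSB hG hconv)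

/-- Convergence of Galerkin mild solutions: under the conclusion of the Trotter–Kato theorem
(strong convergence of the approximating semigroups `T_N ∘ Π_N` to `T`, locally uniformly in
time) and a global Lipschitz condition on `G`, the Galerkin mild solutions `u_N` converge to
the mild solution `u` uniformly on every bounded time interval `[0, T*]`. -/
theorem galerkin_mild_solutions_converge {X : Type*} [NormedAddCommGroup X]
    [InnerProductSpace ℝ X] [CompleteSpace X]
    (M ω : ℝ) (hM : 1 ≤ M) (hω : 0 ≤ ω)
    (T : ℝ → X →L[ℝ] X)
    (hT0 : T 0 = ContinuousLinearMap.id ℝ X)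
    (hTsemigroup : ∀ s t : ℝ, 0 ≤ s → 0 ≤ t → T (t + s) = (T t).comp (T s))
    (hTcont : ∀ x : X, ContinuousOn (fun t => T t x) (Ici 0))
    (hTbound : ∀ t : ℝ, 0 ≤ t → ‖T t‖ ≤ M * Real.exp (ω * t))
    (P : ℕ → X →L[ℝ] X) (hPbound : ∀ N : ℕ, ‖P N‖ ≤ 1)
    (hPlim : ∀ x : X, Tendsto (fun N => P N x) atTop (nhds x))
    (TN : ℕ → ℝ → X →L[ℝ] X)
    (hTNcont : ∀ (N : ℕ) (x : X), ContinuousOn (fun t => TN N t x) (Ici 0))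
    (hTNbound : ∀ (N : ℕ) (t : ℝ), 0 ≤ t → ‖TN N t‖ ≤ M * Real.exp (ω * t))
    (hTrotterKato : ∀ (φ : X) (Tstar : ℝ), 0 < Tstar →
      Tendsto (fun N => ⨆ t : Icc (0 : ℝ) Tstar, ‖TN N (t : ℝ) (P N φ) - T (t : ℝ) φ‖)
        atTop (nhds 0))
    (K : NNReal) (G : X → X) (hG : LipschitzWith K G)
    (u₀ : X) (u : ℝ → X) (hu_cont : Continuous u)
    (hu : ∀ t : ℝ, 0 ≤ t → u t = T t u₀ + ∫ s in (0 : ℝ)..t, T (t - s) (G (u s)))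
    (uN : ℕ → ℝ → X) (huN_cont : ∀ N : ℕ, Continuous (uN N))
    (huN : ∀ (N : ℕ) (t : ℝ), 0 ≤ t →
      uN N t = TN N t (P N u₀) + ∫ s in (0 : ℝ)..t, TN N (t - s) (P N (G (uN N s)))) :
    ∀ Tstar : ℝ, 0 < Tstar →
      Tendsto (fun N => ⨆ t : Icc (0 : ℝ) Tstar, ‖uN N (t : ℝ) - u (t : ℝ)‖)
        atTop (nhds 0) :=
  galerkin_mild_solutions_converge_general M ω T hTcont hTbound P hPbound TN hTNcont hTNbound
    hTrotterKato K G hG u₀ u hu_cont hu uN huN_cont huN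
end
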